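/- For k ≥ 2, consider the bipartite graph of the length-(2^k − 1) Hamming code, with variable nodes {1, …, 2^k − 1} and constraint nodes {0, …, k−1}, where variable i is adjacent to constraint j if and only if bit j of the binary expansion of i equals 1. Let Ŝ be the set of variables whose binary expansion has exactly k−1 ones. Then |Ŝ| = k, each element of Ŝ has degree k−1 so that |δ(Ŝ)| = k(k−1), and N(Ŝ) is the full set of k constraint nodes; hence the expansion ratio satisfies |N(Ŝ)|/|δ(Ŝ)| = 1/(k−1), which tends to 0 as k → ∞. -/

import Mathlib

/-!
Reading a variable `i` as the set of positions of the ones in the binary expansion of `i` is a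
bijection between the variables and the nonempty subsets of the `k` constraints, under which
adjacency is membership and the degree is the cardinality. So `Ŝ` corresponds to the `k` subsets
of size `k - 1`, giving `|δ(Ŝ)| = k (k - 1)`, and every constraint lies in one of them.
-/

open Finset

namespace Bipartite

variable {α β : Type*} [Fintype α] [Fintype β] [DecidableEq α]
  (r : α → β → Prop) [DecidableRel r]

def degree (a : α) : ℕ := #{b | r a b}

/-- `δ(S)`. -/
def edgeBoundary (S : Finset α) : Finset (α × β) := {p | p.1 ∈ S ∧ r p.1 p.2}

/-- `N(S)`. -/
def neighbors (S : Finset α) : Finset β := {b | ∃ a ∈ S, r a b}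

noncomputable def expansionRatio (S : Finset α) : ℝ := #(neighbors r S) / #(edgeBoundary r S)

theorem card_edgeBoundary (S : Finset α) : #(edgeBoundary r S) = ∑ a ∈ S, degree r a :=
  calc #(edgeBoundary r S) = ∑ a, if a ∈ S then degree r a else 0 := by
        simp only [edgeBoundary, degree, card_filter, Fintype.sum_prod_type, ite_and]
        exact sum_congr rfl fun a _ => by split_ifs <;> simp
    _ = ∑ a ∈ S, degree r a := by rw [sum_ite_mem, univ_inter]

end Bipartite

open Bipartite

section BitSupport

variable {k : ℕ}

def bitSupport (k n : ℕ) : Finset (Fin k) := {j | n.testBit j}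

@[simp]
theorem bitSupport_zero : bitSupport k 0 = ∅ := by
  ext
  simp [bitSupport]

@[simp]
theorem mem_bitSupport {n : ℕ} {j : Fin k} : j ∈ bitSupport k n ↔ n.testBit j := by
  simp [bitSupport]

theorem eq_of_bitSupport_eq {m n : ℕ} (hm : m < 2 ^ k) (hn : n < 2 ^ k)
    (h : bitSupport k m = bitSupport k n) : m = n := by
  refine Nat.eq_of_testBit_eq fun j => ?_
  by_cases hj : j < k
  · simpa using congrArg (⟨j, hj⟩ ∈ ·) h
  · have hk : 2 ^ k ≤ 2 ^ j := Nat.pow_le_pow_right two_pos (not_lt.1 hj)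
    rw [Nat.testBit_lt_two_pow (hm.trans_le hk), Nat.testBit_lt_two_pow (hn.trans_le hk)]

theorem sum_two_pow_val_eq_sum_map (s : Finset (Fin k)) :
    ∑ j ∈ s, 2 ^ (j : ℕ) = ∑ i ∈ s.map Fin.valEmbedding, 2 ^ i := by
  rw [sum_map]
  rfl

theorem bitSupport_sum_two_pow (s : Finset (Fin k)) :
    bitSupport k (∑ j ∈ s, 2 ^ (j : ℕ)) = s := by
  ext j
  rw [mem_bitSupport, sum_two_pow_val_eq_sum_map, ← Nat.mem_bitIndices, ← List.mem_toFinset,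
    toFinset_bitIndices_sum_two_pow]
  simp [Fin.val_inj]

theorem sum_two_pow_lt (s : Finset (Fin k)) : ∑ j ∈ s, 2 ^ (j : ℕ) < 2 ^ k := by
  rw [sum_two_pow_val_eq_sum_map]
  exact Nat.geomSum_lt le_rfl (by simp)

end BitSupport

section Hamming

variable {k w : ℕ}

def hammingAdj (k : ℕ) (i : Fin (2 ^ k - 1)) (j : Fin k) : Prop := (i.val + 1).testBit j

instance : DecidableRel (hammingAdj k) := fun _ _ => inferInstanceAs (Decidable (_ = true))

theorem degree_hammingAdj (i : Fin (2 ^ k - 1)) :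
    degree (hammingAdj k) i = #(bitSupport k (i + 1)) :=
  rfl

theorem bitSupport_succ_injective :
    Function.Injective fun i : Fin (2 ^ k - 1) => bitSupport k (i + 1) := fun i i' h =>
  Fin.ext <| Nat.succ_injective <| eq_of_bitSupport_eq (by omega) (by omega) h

theorem exists_bitSupport_succ_eq {s : Finset (Fin k)} (hs : s.Nonempty) :
    ∃ i : Fin (2 ^ k - 1), bitSupport k (i + 1) = s := by
  have hpos : ∑ j ∈ s, 2 ^ (j : ℕ) ≠ 0 := fun h =>
    hs.ne_empty (by rw [← bitSupport_sum_two_pow s, h, bitSupport_zero])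
  refine ⟨⟨∑ j ∈ s, 2 ^ (j : ℕ) - 1, by have := sum_two_pow_lt s; omega⟩, ?_⟩
  rw [Nat.sub_add_cancel (Nat.one_le_iff_ne_zero.2 hpos), bitSupport_sum_two_pow]

def weightVars (k w : ℕ) : Finset (Fin (2 ^ k - 1)) := {i | degree (hammingAdj k) i = w}

@[simp]
theorem mem_weightVars {i : Fin (2 ^ k - 1)} :
    i ∈ weightVars k w ↔ degree (hammingAdj k) i = w := by
  simp [weightVars]

theorem card_weightVars (hw : 1 ≤ w) : #(weightVars k w) = k.choose w := by
  have : k.choose w = #(powersetCard w (univ : Finset (Fin k))) := by simp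
  rw [this]
  refine card_nbij (fun i => bitSupport k (i + 1)) (fun i hi => ?_)
    bitSupport_succ_injective.injOn (fun s hs => ?_)
  · rw [mem_coe, mem_powersetCard, ← degree_hammingAdj, ← mem_weightVars]
    exact ⟨subset_univ _, hi⟩
  · rw [mem_coe, mem_powersetCard] at hs
    obtain ⟨i, hi⟩ := exists_bitSupport_succ_eq (card_pos.1 (hs.2 ▸ hw))
    exact ⟨i, by rw [mem_coe, mem_weightVars, degree_hammingAdj, hi, hs.2], hi⟩

theorem card_edgeBoundary_weightVars (hw : 1 ≤ w) :
    #(edgeBoundary (hammingAdj k) (weightVars k w)) = k.choose w * w := by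
  rw [card_edgeBoundary, sum_const_nat fun i hi => mem_weightVars.1 hi, card_weightVars hw]

theorem neighbors_weightVars (hw : 1 ≤ w) (hwk : w ≤ k) :
    neighbors (hammingAdj k) (weightVars k w) = univ := by
  refine eq_univ_of_forall fun j => ?_
  simp only [neighbors, mem_filter, mem_univ, true_and]
  obtain ⟨s, hjs, -, hs⟩ := exists_subsuperset_card_eq (subset_univ {j}) (by simpa using hw)
    (by simpa using hwk)
  rw [singleton_subset_iff] at hjs
  obtain ⟨i, hi⟩ := exists_bitSupport_succ_eq ⟨j, hjs⟩
  refine ⟨i, ?_, mem_bitSupport.1 (hi ▸ hjs)⟩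
  rw [mem_weightVars, degree_hammingAdj, hi, hs]

theorem expansionRatio_weightVars (hw : 1 ≤ w) (hwk : w ≤ k) :
    expansionRatio (hammingAdj k) (weightVars k w) = k / (k.choose w * w : ℕ) := by
  rw [expansionRatio, neighbors_weightVars hw hwk, card_edgeBoundary_weightVars hw, card_univ,
    Fintype.card_fin]

end Hamming

/-- **The Hamming code bipartite graph is not an expander.**
For `k ≥ 2`, consider the bipartite graph of the length-`2^k - 1` Hamming
code: variable nodes `i : Fin (2^k - 1)` (standing for the integers
`i + 1 ∈ {1, …, 2^k - 1}`) and constraint nodes `j : Fin k`, with `i` adjacent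
to `j` iff bit `j` of `i + 1` equals `1`.  Let `Ŝ` be the set of variables
whose binary expansion has exactly `k - 1` ones.  Then `|Ŝ| = k`, each element
of `Ŝ` has degree `k - 1` so that `|δ(Ŝ)| = k (k-1)`, and `N(Ŝ)` is the full
set of `k` constraint nodes; hence the expansion ratio satisfies
`|N(Ŝ)| / |δ(Ŝ)| = 1 / (k - 1)`, which tends to `0` as `k → ∞`. -/
theorem hamming_graph_expansion_vanishes (k : ℕ) (hk : 2 ≤ k) :
    (Finset.univ.filter (fun i : Fin (2 ^ k - 1) =>
        (Finset.univ.filter (fun j : Fin k => Nat.testBit (i.val + 1) j.val)).card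
          = k - 1)).card = k ∧
    (∀ i ∈ Finset.univ.filter (fun i : Fin (2 ^ k - 1) =>
        (Finset.univ.filter (fun j : Fin k => Nat.testBit (i.val + 1) j.val)).card
          = k - 1),
      (Finset.univ.filter (fun j : Fin k => Nat.testBit (i.val + 1) j.val)).card
        = k - 1) ∧
    (Finset.univ.filter (fun p : Fin (2 ^ k - 1) × Fin k =>
        p.1 ∈ Finset.univ.filter (fun i : Fin (2 ^ k - 1) =>
          (Finset.univ.filter (fun j : Fin k => Nat.testBit (i.val + 1) j.val)).card
            = k - 1) ∧
        Nat.testBit (p.1.val + 1) p.2.val)).card = k * (k - 1) ∧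
    (Finset.univ.filter (fun j : Fin k =>
        ∃ i ∈ Finset.univ.filter (fun i : Fin (2 ^ k - 1) =>
          (Finset.univ.filter (fun j' : Fin k => Nat.testBit (i.val + 1) j'.val)).card
            = k - 1),
          Nat.testBit (i.val + 1) j.val) : Finset (Fin k)) = Finset.univ ∧
    ((Finset.univ.filter (fun j : Fin k =>
        ∃ i ∈ Finset.univ.filter (fun i : Fin (2 ^ k - 1) =>
          (Finset.univ.filter (fun j' : Fin k => Nat.testBit (i.val + 1) j'.val)).card
            = k - 1),
          Nat.testBit (i.val + 1) j.val)).card : ℝ) /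
      ((Finset.univ.filter (fun p : Fin (2 ^ k - 1) × Fin k =>
        p.1 ∈ Finset.univ.filter (fun i : Fin (2 ^ k - 1) =>
          (Finset.univ.filter (fun j : Fin k => Nat.testBit (i.val + 1) j.val)).card
            = k - 1) ∧
        Nat.testBit (p.1.val + 1) p.2.val)).card : ℝ) = 1 / ((k : ℝ) - 1) ∧
    Filter.Tendsto (fun m : ℕ => 1 / ((m : ℝ) - 1)) Filter.atTop (nhds 0) := by
  have hw : 1 ≤ k - 1 := by omega
  have hchoose : k.choose (k - 1) = k := by rw [Nat.choose_symm (by omega), Nat.choose_one_right]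
  have hN := neighbors_weightVars (k := k) hw (by omega)
  have hρ : expansionRatio (hammingAdj k) (weightVars k (k - 1)) = 1 / ((k : ℝ) - 1) := by
    have hk0 : (k : ℝ) ≠ 0 := Nat.cast_ne_zero.2 (by omega)
    rw [expansionRatio_weightVars hw (by omega), hchoose, Nat.cast_mul, Nat.cast_pred (by omega),
      ← div_div, div_self hk0]
  -- `convert` because the statement decides `∃ i ∈ Ŝ, _` by `Nat.decidableExistsFin`, whereas
  -- `neighbors` uses the instance for bounded quantifiers over a finset.
  unfold expansionRatio neighbors at hρ hN
  refine ⟨(card_weightVars hw).trans hchoose, fun i hi => (mem_filter.1 hi).2,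
    (card_edgeBoundary_weightVars hw).trans (by rw [hchoose]), by convert hN <;> rfl,
    by convert hρ <;> rfl,
    tendsto_const_nhds.div_atTop
      (Filter.tendsto_atTop_add_const_right _ _ tendsto_natCast_atTop_atTop)⟩
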